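/- arXiv:1106.5692 — 4 statements merged into one kernel-verified Lean document; each statement's English description precedes it below -/
import Mathlib

section
/- Let p : [0,∞) → [0,1] be continuous with p(0) = 1, and for γ large enough let r(γ) be the unique λ > 0 with ∫₀^∞ e^{-λs} p(s) ds = 1/γ. Then r(γ)/γ → 1 as γ → ∞. -/
open MeasureTheory Set Real Filter

/-! Write `L(c) = ∫₀^∞ e^{-cs} p(s) ds`. Since `p ≤ 1`, `L(c) ≤ 1/c`, so `L(r γ) = 1/γ` forces
`r γ ≤ γ`. Conversely, if `p ≥ q ≥ 0` on `(0, t]`, then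
`L(c) ≥ q (1 - e^{-ct}) / c ≥ q t / (1 + c t)` by `1 + x ≤ eˣ`, and at `c = r γ` this reads
`r γ / γ ≥ q - 1 / (t γ)`. Continuity of `p` at `0` lets `q` be taken arbitrarily close to `1`. -/

lemma div_one_add_le_one_sub_exp_neg {x : ℝ} (hx : -1 < x) : x / (1 + x) ≤ 1 - exp (-x) := by
  have h1x : 0 < 1 + x := by linarith
  have hexp : exp (-x) ≤ (1 + x)⁻¹ := by
    rw [exp_neg]
    exact inv_anti₀ h1x (by linarith [add_one_le_exp x])
  calc x / (1 + x) = 1 - (1 + x)⁻¹ := by field_simp; ring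
    _ ≤ 1 - exp (-x) := by linarith

section LaplaceIntegral

variable {p : ℝ → ℝ} {c : ℝ}

lemma setIntegral_exp_neg_mul_Ioi (hc : 0 < c) (a : ℝ) :
    ∫ s in Ioi a, exp (-c * s) = exp (-c * a) / c := by
  rw [integral_exp_mul_Ioi (neg_neg_of_pos hc), neg_div_neg_eq]

lemma setIntegral_exp_neg_mul_Ioc (hc : 0 < c) {t : ℝ} (ht : 0 ≤ t) :
    ∫ s in Ioc 0 t, exp (-c * s) = (1 - exp (-c * t)) / c := by
  have hsplit := setIntegral_union (Ioc_disjoint_Ioi le_rfl) measurableSet_Ioi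
    ((exp_neg_integrableOn_Ioi 0 hc).mono_set Ioc_subset_Ioi_self) (exp_neg_integrableOn_Ioi t hc)
  rw [Ioc_union_Ioi_eq_Ioi ht, setIntegral_exp_neg_mul_Ioi hc, setIntegral_exp_neg_mul_Ioi hc,
    mul_zero, exp_zero] at hsplit
  rw [sub_div]
  linarith

lemma integrableOn_exp_neg_mul_mul_Ioi (hc : 0 < c) (a : ℝ) {C : ℝ}
    (hp : AEStronglyMeasurable p (volume.restrict (Ioi a))) (hpC : ∀ s ∈ Ioi a, ‖p s‖ ≤ C) :
    IntegrableOn (fun s => exp (-c * s) * p s) (Ioi a) :=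
  (exp_neg_integrableOn_Ioi a hc).mul_bdd hp (ae_restrict_of_forall_mem measurableSet_Ioi hpC)

lemma setIntegral_exp_neg_mul_mul_le_inv (hc : 0 < c) (hp : ∀ s ∈ Ioi (0 : ℝ), p s ≤ 1) :
    ∫ s in Ioi 0, exp (-c * s) * p s ≤ 1 / c := by
  by_cases hint : IntegrableOn (fun s => exp (-c * s) * p s) (Ioi 0)
  · calc ∫ s in Ioi 0, exp (-c * s) * p s ≤ ∫ s in Ioi 0, exp (-c * s) :=
          setIntegral_mono_on hint (exp_neg_integrableOn_Ioi 0 hc) measurableSet_Ioi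
            fun s hs => mul_le_of_le_one_right (exp_pos _).le (hp s hs)
      _ = 1 / c := by rw [setIntegral_exp_neg_mul_Ioi hc, mul_zero, exp_zero]
  · rw [integral_undef hint]
    positivity

lemma mul_one_sub_exp_div_le_setIntegral (hc : 0 < c) {t q : ℝ} (ht : 0 ≤ t)
    (hp_nonneg : ∀ s ∈ Ioi (0 : ℝ), 0 ≤ p s) (hq : ∀ s ∈ Ioc 0 t, q ≤ p s)
    (hint : IntegrableOn (fun s => exp (-c * s) * p s) (Ioi 0)) :
    q * ((1 - exp (-c * t)) / c) ≤ ∫ s in Ioi 0, exp (-c * s) * p s :=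
  calc q * ((1 - exp (-c * t)) / c) = ∫ s in Ioc 0 t, exp (-c * s) * q := by
        rw [integral_mul_const, setIntegral_exp_neg_mul_Ioc hc ht, mul_comm]
    _ ≤ ∫ s in Ioc 0 t, exp (-c * s) * p s :=
        setIntegral_mono_on
          (((exp_neg_integrableOn_Ioi 0 hc).mono_set Ioc_subset_Ioi_self).mul_const q)
          (hint.mono_set Ioc_subset_Ioi_self) measurableSet_Ioc
          fun s hs => mul_le_mul_of_nonneg_left (hq s hs) (exp_pos _).le
    _ ≤ ∫ s in Ioi 0, exp (-c * s) * p s :=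
        setIntegral_mono_set hint
          (ae_restrict_of_forall_mem measurableSet_Ioi
            fun s hs => mul_nonneg (exp_pos _).le (hp_nonneg s hs))
          Ioc_subset_Ioi_self.eventuallyLE

variable {γ : ℝ}

lemma div_le_one_of_setIntegral_eq_inv (hγ : 0 < γ) (hc : 0 < c)
    (hp : ∀ s ∈ Ioi (0 : ℝ), p s ≤ 1) (h : ∫ s in Ioi 0, exp (-c * s) * p s = 1 / γ) :
    c / γ ≤ 1 := by
  have hinv : 1 / γ ≤ 1 / c := h ▸ setIntegral_exp_neg_mul_mul_le_inv hc hp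
  exact (div_le_one hγ).2 ((one_div_le_one_div hγ hc).1 hinv)

lemma sub_inv_div_le_div_of_setIntegral_eq_inv (hγ : 0 < γ) (hc : 0 < c) {t q : ℝ} (ht : 0 < t)
    (hq_nonneg : 0 ≤ q) (hp_nonneg : ∀ s ∈ Ioi (0 : ℝ), 0 ≤ p s) (hq : ∀ s ∈ Ioc 0 t, q ≤ p s)
    (hint : IntegrableOn (fun s => exp (-c * s) * p s) (Ioi 0))
    (h : ∫ s in Ioi 0, exp (-c * s) * p s = 1 / γ) :
    q - t⁻¹ / γ ≤ c / γ := by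
  have hct : 0 < c * t := mul_pos hc ht
  have hbound : q * t / (1 + c * t) ≤ 1 / γ :=
    calc q * t / (1 + c * t) = q * (c * t / (1 + c * t) / c) := by field_simp
      _ ≤ q * ((1 - exp (-(c * t))) / c) := by
          gcongr
          exact div_one_add_le_one_sub_exp_neg (by linarith)
      _ ≤ 1 / γ := by
          rw [← neg_mul, ← h]
          exact mul_one_sub_exp_div_le_setIntegral hc ht.le hp_nonneg hq hint
  rw [div_le_div_iff₀ (by positivity) hγ, one_mul] at hbound
  rw [sub_le_iff_le_add, ← add_div, le_div_iff₀ hγ]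
  calc q * γ = q * t * γ / t := by field_simp
    _ ≤ (1 + c * t) / t := by gcongr
    _ = c + t⁻¹ := by field_simp; ring

end LaplaceIntegral

/-- If for all sufficiently large `γ` the value `r γ` is the unique `λ > 0` with
`∫₀^∞ e^{-λ s} p(s) ds = 1/γ`, where `p : [0,∞) → [0,1]` is continuous with `p(0) = 1`,
then `r(γ)/γ → 1` as `γ → ∞`. -/
theorem growth_rate_div_gamma_tendsto_one
    (p : ℝ → ℝ) (hpc : Continuous p) (hp0 : p 0 = 1)
    (hp01 : ∀ s, 0 ≤ s → 0 ≤ p s ∧ p s ≤ 1)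
    (r : ℝ → ℝ) (γ₀ : ℝ)
    (hr : ∀ γ : ℝ, γ₀ ≤ γ →
      0 < r γ ∧ ∫ s in Set.Ioi (0:ℝ), Real.exp (-(r γ) * s) * p s = 1 / γ) :
    Tendsto (fun γ => r γ / γ) atTop (nhds 1) := by
  have hp_nonneg : ∀ s ∈ Ioi (0 : ℝ), 0 ≤ p s := fun s hs => (hp01 s (le_of_lt hs)).1
  have hp_le_one : ∀ s ∈ Ioi (0 : ℝ), p s ≤ 1 := fun s hs => (hp01 s (le_of_lt hs)).2
  have hint : ∀ c > 0, IntegrableOn (fun s => exp (-c * s) * p s) (Ioi 0) := fun c hc =>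
    integrableOn_exp_neg_mul_mul_Ioi (C := 1) hc 0 hpc.aestronglyMeasurable fun s hs => by
      rw [norm_eq_abs, abs_le]
      constructor <;> linarith [hp_nonneg s hs, hp_le_one s hs]
  refine tendsto_order.2 ⟨fun a ha => ?_, fun b hb => ?_⟩
  · obtain ⟨q, hq_gt, hq_lt⟩ := exists_between (max_lt ha one_pos)
    obtain ⟨t, ht, hpt⟩ := mem_nhdsGT_iff_exists_Ioc_subset.1 <| nhdsWithin_le_nhds <|
      (hpc.tendsto 0).eventually (lt_mem_nhds (hp0 ▸ hq_lt))
    have hlim : Tendsto (fun γ => q - t⁻¹ / γ) atTop (nhds q) := by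
      simpa using (tendsto_const_nhds (x := q)).sub
        ((tendsto_const_nhds (x := t⁻¹)).div_atTop tendsto_id)
    filter_upwards [hlim.eventually (lt_mem_nhds ((le_max_left a 0).trans_lt hq_gt)),
      eventually_gt_atTop 0, eventually_ge_atTop γ₀] with γ ha_lt hγ hγ₀
    obtain ⟨hr_pos, hr_eq⟩ := hr γ hγ₀
    exact ha_lt.trans_le <| sub_inv_div_le_div_of_setIntegral_eq_inv hγ hr_pos ht
      ((le_max_right a 0).trans hq_gt.le) hp_nonneg (fun s hs => (hpt hs).le)
      (hint _ hr_pos) hr_eq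
  · filter_upwards [eventually_gt_atTop 0, eventually_ge_atTop γ₀] with γ hγ hγ₀
    obtain ⟨hr_pos, hr_eq⟩ := hr γ hγ₀
    exact (div_le_one_of_setIntegral_eq_inv hγ hr_pos hp_le_one hr_eq).trans_lt hb
end

section
/- Let X be a continuous-time Markov chain on a countable state space S with right-continuous paths, transition probabilities p_t(i,j), started at i ∈ S. Define the local time L_t^i = ∫₀^t 1{X_s = i} ds. Then for every γ ≥ 0 and t ≥ 0, the renewal equation E[e^{γ L_t^i}] = 1 + γ ∫₀^t E[e^{γ L_{t−s}^i}] p_s(i,i) ds holds. -/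
/-!
Pathwise, `s ↦ exp (γ ∫ₛᵗ 1{X_u = i} du)` has right derivative `-γ 1{X_s = i} exp (…)`
because the path is right-continuous, so the fundamental theorem of calculus gives
`e^{γ L_t} = 1 + γ ∫₀ᵗ 1{X_s = i} e^{γ (L_t - L_s)} ds`. Taking expectations (Fubini) and
applying the Markov property at time `s` turns the integrand into `p_s(i,i) E_i[e^{γ L_{t-s}}]`.
The occupation time is not measurable for the product σ-algebra on paths, but on
right-continuous paths it is the limit of its dyadic discretisations, which are measurable;
this is what lets the Markov property, stated for measurable path sets, be applied.
-/

open MeasureTheory Set Real Filter Topology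

theorem exp_mul_integral_eq_one_add_integral {f : ℝ → ℝ} {a b : ℝ} (hab : a ≤ b)
    (hf : IntervalIntegrable f volume a b)
    (hrc : ∀ s ∈ Ioo a b, ContinuousWithinAt f (Ioi s) s) (γ : ℝ) :
    exp (γ * ∫ u in a..b, f u)
      = 1 + ∫ s in a..b, γ * f s * exp (γ * ∫ u in s..b, f u) := by
  set g : ℝ → ℝ := fun s => exp (γ * ∫ u in s..b, f u)
  have hg : ContinuousOn g (uIcc a b) :=
    (continuous_exp.comp_continuousOn (continuousOn_const.mul
      (intervalIntegral.continuousOn_primitive_interval_left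
        ((intervalIntegrable_iff' (h := by simp)).1 hf))))
  have hg' : ∀ s ∈ Ioo a b, HasDerivWithinAt g (g s * (γ * -f s)) (Ioi s) s := by
    intro s hs
    have hfs : IntervalIntegrable f volume s b := hf.mono_set <|
      uIcc_subset_uIcc (by rw [uIcc_of_le hab]; exact Ioo_subset_Icc_self hs) right_mem_uIcc
    have hmeas : StronglyMeasurableAtFilter f (𝓝[>] s) :=
      ⟨Ioo s b, Ioo_mem_nhdsGT hs.2, (hfs.def'.mono_set
        (by rw [uIoc_of_le hs.2.le]; exact Ioo_subset_Ioc_self)).aestronglyMeasurable⟩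
    exact ((intervalIntegral.integral_hasDerivWithinAt_left hfs hmeas (hrc s hs)).const_mul
      γ).exp.mono Ioi_subset_Ici_self
  have hftc := intervalIntegral.integral_eq_sub_of_hasDeriv_right_of_le hab
    (by simpa [uIcc_of_le hab] using hg) hg' ((hf.neg.const_mul γ).continuousOn_mul hg)
  simp only [g, intervalIntegral.integral_same, mul_zero, exp_zero] at hftc
  rw [← sub_eq_iff_eq_add', ← neg_sub, ← hftc, ← intervalIntegral.integral_neg]
  congr 1 with s
  ring

theorem Measurable.intervalIntegral_prod_right {α : Type*} [MeasurableSpace α]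
    {f : α → ℝ → ℝ} (hf : Measurable (Function.uncurry f)) (a b : ℝ) :
    Measurable fun x => ∫ u in a..b, f x u :=
  (hf.stronglyMeasurable.integral_prod_right (ν := volume.restrict (Ioc a b))).measurable.sub
    (hf.stronglyMeasurable.integral_prod_right (ν := volume.restrict (Ioc b a))).measurable

noncomputable def dyadicCeil (n : ℕ) (u : ℝ) : ℝ := ⌈u * 2 ^ n⌉ / 2 ^ n

theorem le_dyadicCeil (n : ℕ) (u : ℝ) : u ≤ dyadicCeil n u := by
  rw [dyadicCeil, le_div_iff₀ (by positivity)]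
  exact Int.le_ceil _

theorem dyadicCeil_lt (n : ℕ) (u : ℝ) : dyadicCeil n u < u + 2⁻¹ ^ n := by
  rw [dyadicCeil, div_lt_iff₀ (by positivity), add_mul, inv_pow,
    inv_mul_cancel₀ (by positivity)]
  exact Int.ceil_lt_add_one _

theorem tendsto_dyadicCeil (u : ℝ) : Tendsto (dyadicCeil · u) atTop (𝓝[≥] u) := by
  refine tendsto_nhdsWithin_iff.2 ⟨?_, .of_forall (le_dyadicCeil · u)⟩
  have hlim : Tendsto (fun n : ℕ => u + 2⁻¹ ^ n) atTop (𝓝 u) := by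
    simpa using tendsto_const_nhds.add
      (tendsto_pow_atTop_nhds_zero_of_lt_one (by norm_num : (0:ℝ) ≤ 2⁻¹) (by norm_num))
  exact tendsto_of_tendsto_of_tendsto_of_le_of_le tendsto_const_nhds hlim
    (le_dyadicCeil · u) (fun n => (dyadicCeil_lt n u).le)

theorem measurable_eval_dyadicCeil {S : Type*} [MeasurableSpace S] (n : ℕ) :
    Measurable fun p : (ℝ → S) × ℝ => p.1 (dyadicCeil n p.2) := by
  have hgrid : Measurable fun q : (ℝ → S) × ℤ => q.1 (q.2 / 2 ^ n) :=
    measurable_from_prod_countable_left fun k => measurable_pi_apply ((k : ℝ) / 2 ^ n)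
  exact hgrid.comp
    (measurable_fst.prodMk (Int.measurable_ceil.comp (measurable_snd.mul_const _)))

section OccupationTime

variable {S : Type*}

noncomputable def occupationTime (w : ℝ → S) (i : S) (a b : ℝ) : ℝ :=
  ∫ u in a..b, Set.indicator ({i} : Set S) (fun _ => (1:ℝ)) (w u)

theorem norm_indicator_singleton_le_one (i x : S) :
    ‖Set.indicator ({i} : Set S) (fun _ => (1:ℝ)) x‖ ≤ 1 :=
  (norm_indicator_le_norm_self (s := {i}) (f := fun _ => (1:ℝ)) (a := x)).trans_eq norm_one

theorem abs_occupationTime_le (w : ℝ → S) (i : S) (a b : ℝ) :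
    |occupationTime w i a b| ≤ |b - a| := by
  simpa [occupationTime] using intervalIntegral.norm_integral_le_of_norm_le_const
    fun u _ => norm_indicator_singleton_le_one i (w u)

theorem occupationTime_eq_shift (w : ℝ → S) (i : S) (s t : ℝ) :
    occupationTime w i s t = occupationTime (fun u => w (s + u)) i 0 (t - s) := by
  rw [occupationTime, occupationTime,
    intervalIntegral.integral_comp_add_left (fun u => Set.indicator {i} (fun _ => (1:ℝ)) (w u))]
  simp

def IsRightLocallyConstant (w : ℝ → S) : Prop :=
  ∀ s, 0 ≤ s → ∀ᶠ u in 𝓝[≥] s, w u = w s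

theorem IsRightLocallyConstant.comp_const_add {w : ℝ → S} (hw : IsRightLocallyConstant w)
    {s : ℝ} (hs : 0 ≤ s) : IsRightLocallyConstant fun u => w (s + u) := by
  intro u hu
  have hshift : Tendsto (s + ·) (𝓝[≥] u) (𝓝[≥] (s + u)) :=
    tendsto_nhdsWithin_iff.2 ⟨(continuous_const_add s).continuousWithinAt.tendsto,
      eventually_mem_nhdsWithin.mono fun v hv => add_le_add_right hv s⟩
  exact hshift.eventually (hw (s + u) (add_nonneg hs hu))

variable [MeasurableSpace S] [MeasurableSingletonClass S]

theorem intervalIntegrable_indicator_comp {w : ℝ → S} (hw : Measurable w) (i : S) (a b : ℝ) :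
    IntervalIntegrable (fun u => Set.indicator ({i} : Set S) (fun _ => (1:ℝ)) (w u)) volume a b :=
  (intervalIntegrable_const (c := (1:ℝ))).mono_fun
    ((measurable_const.indicator (measurableSet_singleton i)).comp hw).aestronglyMeasurable
    (ae_of_all _ fun u => by simpa using norm_indicator_singleton_le_one i (w u))

theorem continuous_occupationTime_left {w : ℝ → S} (hw : Measurable w) (i : S) (b : ℝ) :
    Continuous fun s => occupationTime w i s b := by
  simp only [occupationTime, intervalIntegral.integral_symm b]
  exact (intervalIntegral.continuous_primitive (intervalIntegrable_indicator_comp hw i) b).neg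

theorem exp_mul_occupationTime_eq {w : ℝ → S} (hw : Measurable w)
    (hrc : IsRightLocallyConstant w) (i : S) (γ : ℝ) {t : ℝ} (ht : 0 ≤ t) :
    exp (γ * occupationTime w i 0 t) = 1 + ∫ s in 0..t, γ
      * Set.indicator ({i} : Set S) (fun _ => (1:ℝ)) (w s) * exp (γ * occupationTime w i s t) :=
  exp_mul_integral_eq_one_add_integral ht (intervalIntegrable_indicator_comp hw i 0 t)
    (fun s hs => continuousWithinAt_const.congr_of_eventuallyEq
      (((hrc s hs.1.le).filter_mono (nhdsWithin_mono s Ioi_subset_Ici_self)).mono fun u hu => by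
        simp [hu]) rfl) γ

theorem tendsto_occupationTime_comp_dyadicCeil {w : ℝ → S}
    (hrc : IsRightLocallyConstant w) (i : S) {T : ℝ} (hT : 0 ≤ T) :
    Tendsto (fun n => occupationTime (w ∘ dyadicCeil n) i 0 T) atTop
      (𝓝 (occupationTime w i 0 T)) := by
  refine intervalIntegral.tendsto_integral_filter_of_dominated_convergence (fun _ => 1)
    (.of_forall fun n => ?_)
    (.of_forall fun n => ae_of_all _ fun u _ => norm_indicator_singleton_le_one i _)
    intervalIntegrable_const (ae_of_all _ fun u hu => ?_)
  · exact ((measurable_const.indicator (measurableSet_singleton i)).comp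
      ((measurable_eval_dyadicCeil n).comp measurable_prodMk_left)).aestronglyMeasurable
  · rw [uIoc_of_le hT] at hu
    exact tendsto_const_nhds.congr'
      (((tendsto_dyadicCeil u).eventually (hrc u hu.1.le)).mono fun n hn => by simp [hn])

theorem exists_measurable_eq_occupationTime (i : S) {T : ℝ} (hT : 0 ≤ T) :
    ∃ G : (ℝ → S) → ℝ, Measurable G ∧ ∀ w : ℝ → S,
      IsRightLocallyConstant w → G w = occupationTime w i 0 T := by
  have hmeas (n : ℕ) :
      Measurable fun w : ℝ → S => occupationTime (w ∘ dyadicCeil n) i 0 T :=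
    Measurable.intervalIntegral_prod_right
      (f := fun (w : ℝ → S) u => Set.indicator {i} (fun _ => (1:ℝ)) (w (dyadicCeil n u)))
      ((measurable_const.indicator (measurableSet_singleton i)).comp
        (measurable_eval_dyadicCeil n)) 0 T
  exact ⟨fun w => limUnder atTop fun n => occupationTime (w ∘ dyadicCeil n) i 0 T,
    (StronglyMeasurable.limUnder fun n => (hmeas n).stronglyMeasurable).measurable,
    fun w hw => (tendsto_occupationTime_comp_dyadicCeil hw i hT).limUnder_eq⟩

end OccupationTime

theorem setIntegral_comp_eq_toReal_smul_integral_comp {Ω E F : Type*} [MeasurableSpace Ω]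
    [MeasurableSpace E] [NormedAddCommGroup F] [NormedSpace ℝ F] {μ : Measure Ω} {A : Set Ω}
    {Φ Ψ : Ω → E} (hΦ : Measurable Φ) (hΨ : Measurable Ψ)
    (h : ∀ C, MeasurableSet C → μ (A ∩ Φ ⁻¹' C) = μ A * μ (Ψ ⁻¹' C))
    {G : E → F} (hG : StronglyMeasurable G) :
    ∫ ω in A, G (Φ ω) ∂μ = (μ A).toReal • ∫ ω, G (Ψ ω) ∂μ := by
  have hmap : (μ.restrict A).map Φ = μ A • μ.map Ψ := by
    ext C hC
    rw [Measure.map_apply hΦ hC, Measure.restrict_apply (hΦ hC), inter_comm, h C hC,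
      Measure.smul_apply, Measure.map_apply hΨ hC, smul_eq_mul]
  rw [← integral_map hΦ.aemeasurable hG.aestronglyMeasurable, hmap, integral_smul_measure,
    integral_map hΨ.aemeasurable hG.aestronglyMeasurable]

section MarkovProcess

variable {S Ω : Type*} [MeasurableSpace S] [MeasurableSingletonClass S] [MeasurableSpace Ω]
  {X : ℝ → Ω → S}

theorem integral_indicator_mul_exp_occupationTime_eq {ν : Measure Ω}
    (hmeas : Measurable fun q : ℝ × Ω => X q.1 q.2)
    (hrc : ∀ ω, IsRightLocallyConstant (X · ω))
    (i : S) {s t : ℝ} (hs : 0 ≤ s) (hst : s ≤ t)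
    (hMarkov : ∀ C : Set (ℝ → S), MeasurableSet C →
      ν {ω | X s ω = i ∧ (fun u => X (s + u) ω) ∈ C}
        = ν {ω | X s ω = i} * ν {ω | (fun u => X u ω) ∈ C}) (γ : ℝ) :
    ∫ ω, Set.indicator ({i} : Set S) (fun _ => (1:ℝ)) (X s ω)
        * exp (γ * occupationTime (X · ω) i s t) ∂ν
      = (ν {ω | X s ω = i}).toReal
          * ∫ ω, exp (γ * occupationTime (X · ω) i 0 (t - s)) ∂ν := by
  obtain ⟨G, hG, hGeq⟩ := exists_measurable_eq_occupationTime i (sub_nonneg.2 hst)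
  have hA : MeasurableSet {ω | X s ω = i} :=
    (hmeas.comp measurable_prodMk_left) (measurableSet_singleton i)
  have hpaths : Measurable fun ω (u : ℝ) => X u ω :=
    measurable_pi_lambda _ fun u => hmeas.comp measurable_prodMk_left
  have hshifted : Measurable fun ω (u : ℝ) => X (s + u) ω :=
    measurable_pi_lambda _ fun u => hmeas.comp measurable_prodMk_left
  calc ∫ ω, Set.indicator ({i} : Set S) (fun _ => (1:ℝ)) (X s ω)
        * exp (γ * occupationTime (X · ω) i s t) ∂ν
      = ∫ ω in {ω | X s ω = i}, exp (γ * G fun u => X (s + u) ω) ∂ν := by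
        rw [← integral_indicator hA]
        congr 1 with ω
        by_cases hω : X s ω = i
        · simp [hω, occupationTime_eq_shift, hGeq _ ((hrc ω).comp_const_add hs)]
        · simp [hω]
    _ = (ν {ω | X s ω = i}).toReal * ∫ ω, exp (γ * G fun u => X u ω) ∂ν :=
        setIntegral_comp_eq_toReal_smul_integral_comp hshifted hpaths hMarkov
          (measurable_exp.comp (hG.const_mul γ)).stronglyMeasurable
    _ = (ν {ω | X s ω = i}).toReal
          * ∫ ω, exp (γ * occupationTime (X · ω) i 0 (t - s)) ∂ν := by
        simp_rw [hGeq _ (hrc _)]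

theorem integrable_indicator_mul_exp_occupationTime {ν : Measure Ω} [IsFiniteMeasure ν]
    (hmeas : Measurable fun q : ℝ × Ω => X q.1 q.2) (i : S) (γ t : ℝ) :
    Integrable (Function.uncurry fun s ω =>
        γ * Set.indicator ({i} : Set S) (fun _ => (1:ℝ)) (X s ω)
          * exp (γ * occupationTime (X · ω) i s t)) ((volume.restrict (Ioc 0 t)).prod ν) := by
  have hind : Measurable (Set.indicator ({i} : Set S) (fun _ => (1:ℝ))) :=
    measurable_const.indicator (measurableSet_singleton i)
  have hocc : Measurable fun q : ℝ × Ω => occupationTime (X · q.2) i q.1 t :=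
    measurable_uncurry_of_continuous_of_measurable
      (u := fun s ω => occupationTime (X · ω) i s t)
      (fun ω => continuous_occupationTime_left (hmeas.comp measurable_prodMk_right) i t)
      (fun s => Measurable.intervalIntegral_prod_right
        (f := fun ω u => Set.indicator ({i} : Set S) (fun _ => (1:ℝ)) (X u ω))
        (hind.comp (hmeas.comp measurable_swap)) s t)
  refine Integrable.mono' (integrable_const (|γ| * 1 * exp (|γ| * t)))
    ((measurable_const.mul (hind.comp hmeas)).mul
      (measurable_exp.comp (measurable_const.mul hocc))).aestronglyMeasurable ?_
  rw [Measure.restrict_prod_eq_prod_univ]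
  filter_upwards [ae_restrict_mem (measurableSet_Ioc.prod MeasurableSet.univ)]
    with ⟨s, ω⟩ ⟨hs, _⟩
  have hbound : |occupationTime (X · ω) i s t| ≤ t :=
    (abs_occupationTime_le _ i s t).trans
      (by rw [abs_of_nonneg (sub_nonneg.2 hs.2)]; linarith [hs.1])
  simp only [Function.uncurry_apply_pair, norm_mul, norm_of_nonneg (exp_pos _).le,
    Real.norm_eq_abs γ]
  gcongr _ * ?_ * exp ?_
  · exact norm_indicator_singleton_le_one i _
  · exact (le_abs_self _).trans (by rw [abs_mul]; gcongr)

end MarkovProcess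

theorem local_time_renewal_equation_general
    {S : Type*} [MeasurableSpace S] [MeasurableSingletonClass S]
    {Ω : Type*} [MeasurableSpace Ω]
    (μ : S → Measure Ω) (hprob : ∀ j, IsProbabilityMeasure (μ j))
    (X : ℝ → Ω → S)
    (hmeas : Measurable fun q : ℝ × Ω => X q.1 q.2)
    (hrc : ∀ ω : Ω, ∀ t : ℝ, 0 ≤ t → ∃ ε > 0, ∀ u ∈ Set.Ico t (t + ε), X u ω = X t ω)
    (p : ℝ → S → S → ℝ)
    (hp : ∀ t : ℝ, 0 ≤ t → ∀ j k : S, p t j k = (μ j {ω | X t ω = k}).toReal)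
    (hMarkov : ∀ j k : S, ∀ s : ℝ, 0 ≤ s → ∀ C : Set (ℝ → S), MeasurableSet C →
      μ j {ω | X s ω = k ∧ (fun u => X (s + u) ω) ∈ C}
        = μ j {ω | X s ω = k} * μ k {ω | (fun u => X u ω) ∈ C})
    (i : S)
    (L : ℝ → Ω → ℝ)
    (hL : ∀ t ω, L t ω = ∫ s in (0:ℝ)..t, Set.indicator ({i} : Set S) (fun _ => (1:ℝ)) (X s ω)) :
    ∀ γ : ℝ, 0 ≤ γ → ∀ t : ℝ, 0 ≤ t →
      ∫ ω, Real.exp (γ * L t ω) ∂(μ i)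
        = 1 + γ * ∫ s in (0:ℝ)..t,
            (∫ ω, Real.exp (γ * L (t - s) ω) ∂(μ i)) * p s i i := by
  intro γ _ t ht
  have := hprob i
  obtain rfl : L = fun t ω => occupationTime (X · ω) i 0 t := funext₂ hL
  have hrc' (ω : Ω) : IsRightLocallyConstant (X · ω) := fun s hs => by
    obtain ⟨ε, hε, hconst⟩ := hrc ω s hs
    exact mem_nhdsGE_iff_exists_Ico_subset.2 ⟨s + ε, by simpa using hε, hconst⟩
  have hint := integrable_indicator_mul_exp_occupationTime (ν := μ i) hmeas i γ t
  calc ∫ ω, exp (γ * occupationTime (X · ω) i 0 t) ∂μ i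
      = ∫ ω, (1 + ∫ s in 0..t, γ * Set.indicator ({i} : Set S) (fun _ => (1:ℝ)) (X s ω)
          * exp (γ * occupationTime (X · ω) i s t)) ∂μ i := by
        congr 1 with ω
        exact exp_mul_occupationTime_eq (hmeas.comp measurable_prodMk_right) (hrc' ω) i γ ht
    _ = 1 + ∫ s in 0..t, ∫ ω, γ * Set.indicator ({i} : Set S) (fun _ => (1:ℝ)) (X s ω)
          * exp (γ * occupationTime (X · ω) i s t) ∂μ i := by
        rw [integral_add (integrable_const 1), integral_const, intervalIntegral_integral_swap]
        · simp
        · rwa [uIoc_of_le ht]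
        · simpa only [intervalIntegral.integral_of_le ht, Function.uncurry_apply_pair]
            using hint.integral_prod_right
    _ = 1 + γ * ∫ s in 0..t, (∫ ω, exp (γ * occupationTime (X · ω) i 0 (t - s)) ∂μ i)
          * p s i i := by
        rw [← intervalIntegral.integral_const_mul]
        congr 1
        refine intervalIntegral.integral_congr fun s hs => ?_
        rw [uIcc_of_le ht] at hs
        simp only [mul_assoc, integral_const_mul]
        rw [integral_indicator_mul_exp_occupationTime_eq hmeas hrc' i hs.1 hs.2
          (hMarkov i i s hs.1) γ, hp s hs.1 i i]
        ring

/-- Renewal equation for exponential moments of local times of a continuous-time Markov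
chain on a countable state space. `μ j` is the law of the chain started at `j`, `X` is the
coordinate/canonical process (with right-continuous paths in the discrete sense), `p t j k`
the transition probability, the (time-homogeneous) Markov property is stated via
independence of the past position and the shifted path, and `L t ω` is the occupation time
of the state `i` up to time `t`. Then
`E[e^{γ L_t}] = 1 + γ ∫₀^t E[e^{γ L_{t-s}}] p_s(i,i) ds`. -/
theorem local_time_renewal_equation
    {S : Type*} [Countable S] [MeasurableSpace S] [MeasurableSingletonClass S]
    {Ω : Type*} [MeasurableSpace Ω]
    (μ : S → Measure Ω) (hprob : ∀ j, IsProbabilityMeasure (μ j))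
    (X : ℝ → Ω → S)
    (hmeas : Measurable fun q : ℝ × Ω => X q.1 q.2)
    (hrc : ∀ ω : Ω, ∀ t : ℝ, 0 ≤ t → ∃ ε > 0, ∀ u ∈ Set.Ico t (t + ε), X u ω = X t ω)
    (hstart : ∀ j : S, ∀ᵐ ω ∂(μ j), X 0 ω = j)
    (p : ℝ → S → S → ℝ)
    (hp : ∀ t : ℝ, 0 ≤ t → ∀ j k : S, p t j k = (μ j {ω | X t ω = k}).toReal)
    (hMarkov : ∀ j k : S, ∀ s : ℝ, 0 ≤ s → ∀ C : Set (ℝ → S), MeasurableSet C →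
      μ j {ω | X s ω = k ∧ (fun u => X (s + u) ω) ∈ C}
        = μ j {ω | X s ω = k} * μ k {ω | (fun u => X u ω) ∈ C})
    (i : S)
    (L : ℝ → Ω → ℝ)
    (hL : ∀ t ω, L t ω = ∫ s in (0:ℝ)..t, Set.indicator ({i} : Set S) (fun _ => (1:ℝ)) (X s ω)) :
    ∀ γ : ℝ, 0 ≤ γ → ∀ t : ℝ, 0 ≤ t →
      ∫ ω, Real.exp (γ * L t ω) ∂(μ i)
        = 1 + γ * ∫ s in (0:ℝ)..t,
            (∫ ω, Real.exp (γ * L (t - s) ω) ∂(μ i)) * p s i i :=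
  local_time_renewal_equation_general μ hprob X hmeas hrc p hp hMarkov i L hL
end

section
/- Let Z : [0,∞) → [1,∞) be a measurable, nondecreasing, locally bounded function satisfying the renewal equation Z(t) = 1 + γ ∫₀^t Z(t−s) p(s) ds, where p : [0,∞) → [0,1] is measurable and γ ≥ 0 satisfies γ ∫₀^∞ p(s) ds < 1. Then Z(t) → 1/(1 − γ G_∞) as t → ∞, where G_∞ = ∫₀^∞ p(s) ds. -/
open MeasureTheory Set Filter

/-!
No Laplace transform is needed. Since `Z` is nondecreasing, `Z (t - s) ≤ Z t` inside the
convolution, so the renewal equation gives `Z t ≤ 1 + γ G Z t` with `G = ∫₀^∞ p`, i.e.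
`Z t ≤ 1 / (1 - γ G)`. Thus `Z` increases to a finite limit `L`; dominated convergence (with
dominating function `(1 - γ G)⁻¹ p`) passes to the limit in the renewal equation, giving
`L = 1 + γ G L`.
-/

theorem exists_tendsto_atTop_of_monotoneOn_Ici {ι α : Type*} [LinearOrder ι]
    [ConditionallyCompleteLinearOrder α] [TopologicalSpace α] [OrderTopology α]
    {f : ι → α} {a : ι} (hf : MonotoneOn f (Ici a)) (hbdd : BddAbove (f '' Ici a)) :
    ∃ L, Tendsto f atTop (nhds L) := by
  have hmono : Monotone fun x => f (max x a) := fun x y hxy =>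
    hf (le_max_right x a) (le_max_right y a) (max_le_max hxy le_rfl)
  have hbdd' : BddAbove (range fun x => f (max x a)) :=
    hbdd.mono (range_subset_iff.2 fun x => mem_image_of_mem f (le_max_right x a))
  refine ⟨_, (tendsto_atTop_ciSup hmono hbdd').congr' ?_⟩
  filter_upwards [eventually_ge_atTop a] with x hx
  rw [max_eq_left hx]

section Convolution

variable {Z p : ℝ → ℝ}

theorem integral_comp_sub_mul_le_mul_integral_Ioi (hZ0 : ∀ t, 0 ≤ t → 0 ≤ Z t)
    (hZmono : MonotoneOn Z (Ici 0)) (hp0 : ∀ s, 0 < s → 0 ≤ p s)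
    (hp : IntegrableOn p (Ioi 0)) {t : ℝ} (ht : 0 ≤ t) :
    ∫ s in (0:ℝ)..t, Z (t - s) * p s ≤ Z t * ∫ s in Ioi (0:ℝ), p s := by
  rw [intervalIntegral.integral_of_le ht]
  have hpt : IntegrableOn p (Ioc 0 t) := hp.mono_set Ioc_subset_Ioi_self
  calc ∫ s in Ioc 0 t, Z (t - s) * p s
      ≤ ∫ s in Ioc 0 t, Z t * p s := by
        refine integral_mono_of_nonneg ?_ (hpt.const_mul _) ?_ <;>
          filter_upwards [ae_restrict_mem measurableSet_Ioc] with s hs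
        · exact mul_nonneg (hZ0 _ (by linarith [hs.2])) (hp0 s hs.1)
        · exact mul_le_mul_of_nonneg_right
            (hZmono (mem_Ici.2 (by linarith [hs.2])) (mem_Ici.2 ht) (by linarith [hs.1]))
            (hp0 s hs.1)
    _ = Z t * ∫ s in Ioc 0 t, p s := integral_const_mul _ _
    _ ≤ Z t * ∫ s in Ioi (0:ℝ), p s := by
        refine mul_le_mul_of_nonneg_left ?_ (hZ0 t ht)
        refine setIntegral_mono_set hp ?_ Ioc_subset_Ioi_self.eventuallyLE
        filter_upwards [ae_restrict_mem measurableSet_Ioi] with s hs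
        exact hp0 s hs

theorem tendsto_integral_comp_sub_mul {L M : ℝ} (hZm : Measurable Z)
    (hZM : ∀ t, 0 ≤ t → |Z t| ≤ M) (hZL : Tendsto Z atTop (nhds L))
    (hp : IntegrableOn p (Ioi 0)) :
    Tendsto (fun t => ∫ s in (0:ℝ)..t, Z (t - s) * p s) atTop
      (nhds (L * ∫ s in Ioi (0:ℝ), p s)) := by
  have hind : ∀ t, 0 ≤ t → ∫ s in (0:ℝ)..t, Z (t - s) * p s =
      ∫ s in Ioi (0:ℝ), (Ioc 0 t).indicator (fun s => Z (t - s) * p s) s := by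
    intro t ht
    rw [integral_indicator measurableSet_Ioc, Measure.restrict_restrict measurableSet_Ioc,
      inter_eq_left.2 Ioc_subset_Ioi_self, intervalIntegral.integral_of_le ht]
  rw [← integral_const_mul]
  refine Tendsto.congr' (EventuallyEq.symm ?_) <|
    tendsto_integral_filter_of_dominated_convergence (fun s => M * |p s|)
      (F := fun t s => (Ioc 0 t).indicator (fun s => Z (t - s) * p s) s) ?_ ?_
      (hp.norm.const_mul M) ?_
  · filter_upwards [eventually_ge_atTop 0] with t ht using hind t ht
  · exact Eventually.of_forall fun t =>
      (((hZm.comp (measurable_const.sub measurable_id)).aestronglyMeasurable.mul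
        hp.aestronglyMeasurable).indicator measurableSet_Ioc)
  · refine Eventually.of_forall fun t => Eventually.of_forall fun s => ?_
    by_cases hs : s ∈ Ioc 0 t
    · rw [indicator_of_mem hs, norm_mul, Real.norm_eq_abs, Real.norm_eq_abs]
      exact mul_le_mul_of_nonneg_right (hZM _ (by linarith [hs.2])) (abs_nonneg _)
    · rw [indicator_of_notMem hs, norm_zero]
      exact mul_nonneg ((abs_nonneg _).trans (hZM 0 le_rfl)) (abs_nonneg _)
  · filter_upwards [ae_restrict_mem measurableSet_Ioi] with s hs
    refine ((hZL.comp (tendsto_atTop_add_const_right atTop (-s) tendsto_id)).mul_const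
      (p s)).congr' ?_
    filter_upwards [eventually_ge_atTop s] with t ht
    rw [indicator_of_mem (mem_Ioc.2 ⟨hs, ht⟩)]
    rfl

end Convolution

theorem renewal_subcritical_limit_general
    (p : ℝ → ℝ)
    (hp01 : ∀ s, 0 ≤ s → 0 ≤ p s ∧ p s ≤ 1)
    (hpint : IntegrableOn p (Set.Ioi 0))
    (γ : ℝ) (hγ : 0 ≤ γ)
    (hsub : γ * ∫ s in Set.Ioi (0:ℝ), p s < 1)
    (Z : ℝ → ℝ) (hZm : Measurable Z)
    (hZ1 : ∀ t, 0 ≤ t → 1 ≤ Z t)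
    (hZmono : MonotoneOn Z (Set.Ici 0))
    (hren : ∀ t : ℝ, 0 ≤ t → Z t = 1 + γ * ∫ s in (0:ℝ)..t, Z (t - s) * p s) :
    Tendsto Z atTop (nhds (1 / (1 - γ * ∫ s in Set.Ioi (0:ℝ), p s))) := by
  set G := ∫ s in Ioi (0:ℝ), p s
  have hZ0 : ∀ t, 0 ≤ t → 0 ≤ Z t := fun t ht => zero_le_one.trans (hZ1 t ht)
  have hp0 : ∀ s, 0 < s → 0 ≤ p s := fun s hs => (hp01 s hs.le).1
  have hZle : ∀ t, 0 ≤ t → Z t ≤ 1 / (1 - γ * G) := by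
    intro t ht
    have hconv := integral_comp_sub_mul_le_mul_integral_Ioi hZ0 hZmono hp0 hpint ht
    rw [le_div_iff₀ (by linarith)]
    nlinarith [mul_le_mul_of_nonneg_left hconv hγ, hren t ht]
  obtain ⟨L, hL⟩ := exists_tendsto_atTop_of_monotoneOn_Ici hZmono
    ⟨_, forall_mem_image.2 hZle⟩
  have hrenL : Tendsto Z atTop (nhds (1 + γ * (L * G))) := by
    have hZabs : ∀ t, 0 ≤ t → |Z t| ≤ 1 / (1 - γ * G) := fun t ht =>
      (abs_of_nonneg (hZ0 t ht)).trans_le (hZle t ht)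
    refine (((tendsto_integral_comp_sub_mul hZm hZabs hL hpint).const_mul γ).const_add
      1).congr' ?_
    filter_upwards [eventually_ge_atTop 0] with t ht using (hren t ht).symm
  have hLeq : L = 1 + γ * (L * G) := tendsto_nhds_unique hL hrenL
  rwa [show 1 / (1 - γ * G) = L by rw [div_eq_iff (by linarith)]; linarith]

/-- Subcritical case: if `Z : [0,∞) → [1,∞)` is measurable, nondecreasing, locally bounded
and satisfies the renewal equation `Z(t) = 1 + γ ∫₀^t Z(t-s) p(s) ds` with
`γ ∫₀^∞ p(s) ds < 1`, then `Z(t) → 1/(1 - γ G_∞)` as `t → ∞`. -/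
theorem renewal_subcritical_limit
    (p : ℝ → ℝ) (hpm : Measurable p)
    (hp01 : ∀ s, 0 ≤ s → 0 ≤ p s ∧ p s ≤ 1)
    (hpint : IntegrableOn p (Set.Ioi 0))
    (γ : ℝ) (hγ : 0 ≤ γ)
    (hsub : γ * ∫ s in Set.Ioi (0:ℝ), p s < 1)
    (Z : ℝ → ℝ) (hZm : Measurable Z)
    (hZ1 : ∀ t, 0 ≤ t → 1 ≤ Z t)
    (hZmono : MonotoneOn Z (Set.Ici 0))
    (hZbdd : ∀ T : ℝ, ∃ C : ℝ, ∀ t ∈ Set.Icc (0:ℝ) T, Z t ≤ C)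
    (hren : ∀ t : ℝ, 0 ≤ t → Z t = 1 + γ * ∫ s in (0:ℝ)..t, Z (t - s) * p s) :
    Tendsto Z atTop (nhds (1 / (1 - γ * ∫ s in Set.Ioi (0:ℝ), p s))) :=
  renewal_subcritical_limit_general p hp01 hpint γ hγ hsub Z hZm hZ1 hZmono hren
end

section
/- Let U(ds) = γ p(s) ds be a probability measure on (0,∞) with p : [0,∞) → [0,1] measurable and γ ∫₀^∞ p(s) ds = 1, and let Z(t) = ∑_{n≥0} U^{*n}([0,t]). Define m(t) = ∫₀^t (1 − γ ∫₀^s p(r) dr) ds. Then 1 ≤ liminf_{t→∞} Z(t)·m(t)/t and limsup_{t→∞} Z(t)·m(t)/t ≤ 2. -/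
/-!
Let `Ḡ(u) = U(u, ∞)` for `u ≥ 0` (and `0` for `u < 0`), `V = ∑ₙ U^{*n}` and `m(t) = ∫_{s ≤ t} Ḡ`.
Since `U^{*n}(-∞, t] - U^{*(n+1)}(-∞, t] = ∫ Ḡ(t - x) dU^{*n}(x)`, the sum telescopes to the renewal
equation `∫ Ḡ(t - x) dV(x) = 1_{t ≥ 0}`; the tail `U^{*n}(-∞, t]` vanishes because the Chernoff
bound `U^{*n}(-∞, t] ≤ eᵗ (∫ e^{-x} dU)ⁿ` is summable. Integrating over `t ≤ T` and swapping the
integrals gives `∫ m(T - x) dV(x) = T`. As `m` is nondecreasing and vanishes on `(-∞, 0)`, this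
yields `T ≤ m(T) V[0, T]`, and also `m(t) V[0, t] ≤ ∫_{[0, t]} m(2t - x) dV(x) ≤ 2t`.
-/

open MeasureTheory Set Real Filter
open scoped ENNReal

/-- `n`-fold convolution power of a measure on `ℝ`, with `U^{*0} = δ₀`. -/
noncomputable def convPow (U : Measure ℝ) : ℕ → Measure ℝ
  | 0 => Measure.dirac 0
  | n + 1 => (convPow U n).conv U

/-- The measure `U(ds) = γ p(s) ds` on `(0,∞)`. -/
noncomputable def renewalMeasure (γ : ℝ) (p : ℝ → ℝ) : Measure ℝ :=
  (volume.restrict (Set.Ioi 0)).withDensity fun s => ENNReal.ofReal (γ * p s)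

section ConvPow

variable {U : Measure ℝ}

instance convPow.instSFinite [SFinite U] (n : ℕ) : SFinite (convPow U n) := by
  induction n with
  | zero => exact inferInstanceAs (SFinite (Measure.dirac 0))
  | succ n ih => exact inferInstanceAs (SFinite ((convPow U n).conv U))

lemma convPow_succ_apply [SFinite U] (n : ℕ) {s : Set ℝ} (hs : MeasurableSet s) :
    convPow U (n + 1) s = ∫⁻ x, U ((x + ·) ⁻¹' s) ∂convPow U n := by
  rw [← lintegral_indicator_one hs, convPow, Measure.lintegral_conv (measurable_one.indicator hs)]
  congr 1 with x
  exact lintegral_indicator_one (measurable_const_add x hs)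

lemma convPow_succ_apply_Iic [SFinite U] (n : ℕ) (t : ℝ) :
    convPow U (n + 1) (Iic t) = ∫⁻ x, U (Iic (t - x)) ∂convPow U n := by
  simp_rw [convPow_succ_apply n measurableSet_Iic, preimage_const_add_Iic]

lemma convPow_Iio_eq_zero [SFinite U] (hU : U (Iio 0) = 0) (n : ℕ) :
    convPow U n (Iio 0) = 0 := by
  induction n with
  | zero => simp [convPow]
  | succ n ih =>
    rw [convPow_succ_apply n measurableSet_Iio]
    refine (lintegral_congr_ae ?_).trans lintegral_zero
    filter_upwards [measure_eq_zero_iff_ae_notMem.mp ih] with x hx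
    rw [mem_Iio, not_lt] at hx
    exact measure_mono_null (fun y hy => by simp only [mem_preimage, mem_Iio] at hy ⊢; linarith) hU

lemma measure_Iic_le_exp_mul_lintegral_exp_neg (μ : Measure ℝ) (t : ℝ) :
    μ (Iic t) ≤ ENNReal.ofReal (exp t) * ∫⁻ x, ENNReal.ofReal (exp (-x)) ∂μ := by
  rw [← lintegral_indicator_one measurableSet_Iic, ← lintegral_const_mul _ (by fun_prop)]
  refine lintegral_mono fun x => ?_
  rw [← ENNReal.ofReal_mul (exp_pos t).le, ← exp_add, ← sub_eq_add_neg]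
  by_cases hx : x ≤ t
  · rw [indicator_of_mem (mem_Iic.mpr hx), Pi.one_apply, ← ENNReal.ofReal_one]
    exact ENNReal.ofReal_le_ofReal (one_le_exp (sub_nonneg.mpr hx))
  · rw [indicator_of_notMem (mt mem_Iic.mp hx)]
    exact zero_le

lemma lintegral_exp_neg_convPow [SFinite U] (n : ℕ) :
    ∫⁻ x, ENNReal.ofReal (exp (-x)) ∂convPow U n = (∫⁻ x, ENNReal.ofReal (exp (-x)) ∂U) ^ n := by
  induction n with
  | zero => simp [convPow, lintegral_dirac]
  | succ n ih =>
    have hmul : ∀ x y : ℝ, ENNReal.ofReal (exp (-(x + y)))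
        = ENNReal.ofReal (exp (-x)) * ENNReal.ofReal (exp (-y)) := fun x y => by
      rw [← ENNReal.ofReal_mul (exp_pos _).le, ← exp_add, neg_add]
    simp_rw [convPow,
      Measure.lintegral_conv (f := fun x => ENNReal.ofReal (exp (-x))) (by fun_prop),
      hmul, lintegral_const_mul _ (by fun_prop : Measurable fun y : ℝ => ENNReal.ofReal (exp (-y)))]
    rw [lintegral_mul_const _ (by fun_prop), ih, pow_succ]

lemma lintegral_exp_neg_lt_one [IsProbabilityMeasure U] (hU : U (Iic 0) = 0) :
    ∫⁻ x, ENNReal.ofReal (exp (-x)) ∂U < 1 := by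
  have hlt : ∀ᵐ x ∂U, ENNReal.ofReal (exp (-x)) < 1 := by
    filter_upwards [measure_eq_zero_iff_ae_notMem.mp hU] with x hx
    rw [ENNReal.ofReal_lt_one, exp_lt_one_iff, neg_lt_zero]
    exact not_le.mp hx
  have hle : ∫⁻ x, ENNReal.ofReal (exp (-x)) ∂U ≤ 1 :=
    (lintegral_mono_ae (hlt.mono fun _ h => h.le)).trans_eq (by simp)
  calc ∫⁻ x, ENNReal.ofReal (exp (-x)) ∂U < ∫⁻ _, 1 ∂U :=
        lintegral_strict_mono (IsProbabilityMeasure.ne_zero U) aemeasurable_const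
          (ne_top_of_le_ne_top ENNReal.one_ne_top hle) hlt
    _ = 1 := by simp

lemma tsum_convPow_Iic_ne_top [IsProbabilityMeasure U] (hU : U (Iic 0) = 0) (t : ℝ) :
    ∑' n, convPow U n (Iic t) ≠ ⊤ := by
  refine ne_top_of_le_ne_top ?_
    (ENNReal.tsum_le_tsum fun n => measure_Iic_le_exp_mul_lintegral_exp_neg (convPow U n) t)
  simp_rw [lintegral_exp_neg_convPow, ENNReal.tsum_mul_left, ENNReal.tsum_geometric]
  exact ENNReal.mul_ne_top ENNReal.ofReal_ne_top
    (ENNReal.inv_ne_top.mpr (tsub_pos_iff_lt.mpr (lintegral_exp_neg_lt_one hU)).ne')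

end ConvPow

section RenewalEquation

variable {U : Measure ℝ}

noncomputable def survivalFn (U : Measure ℝ) : ℝ → ℝ≥0∞ :=
  (Ici 0).indicator fun u => U (Ioi u)

lemma measurable_survivalFn : Measurable (survivalFn U) :=
  (Antitone.measurable fun _ _ h => measure_mono (Ioi_subset_Ioi h)).indicator measurableSet_Ici

lemma indicator_Ici_eq_measure_Iic_add_survivalFn [IsProbabilityMeasure U]
    (hU : U (Iio 0) = 0) (u : ℝ) :
    (Ici 0).indicator 1 u = U (Iic u) + survivalFn U u := by
  by_cases hu : u ∈ Ici 0
  · rw [survivalFn, indicator_of_mem hu, indicator_of_mem hu, Pi.one_apply, ← compl_Iic,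
      measure_add_measure_compl measurableSet_Iic, measure_univ]
  · rw [survivalFn, indicator_of_notMem hu, indicator_of_notMem hu, add_zero,
      measure_mono_null (Iic_subset_Iio.mpr (not_le.mp hu)) hU]

lemma convPow_apply_Iic_eq_succ_add [IsProbabilityMeasure U] (hU : U (Iio 0) = 0)
    (n : ℕ) (t : ℝ) :
    convPow U n (Iic t)
      = convPow U (n + 1) (Iic t) + ∫⁻ x, survivalFn U (t - x) ∂convPow U n := by
  have hind : ∀ x, (Iic t).indicator 1 x = (Ici (0 : ℝ)).indicator (1 : ℝ → ℝ≥0∞) (t - x) :=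
    fun x => by simp [indicator_apply, sub_nonneg]
  have hF : Measurable fun x => U (Iic (t - x)) :=
    (Monotone.measurable fun _ _ h => measure_mono (Iic_subset_Iic.mpr h)).comp
      (measurable_const.sub measurable_id)
  rw [convPow_succ_apply_Iic, ← lintegral_add_left hF, ← lintegral_indicator_one measurableSet_Iic]
  simp_rw [hind, indicator_Ici_eq_measure_Iic_add_survivalFn hU]

lemma sum_lintegral_survivalFn_add_convPow [IsProbabilityMeasure U] (hU : U (Iio 0) = 0)
    (t : ℝ) (N : ℕ) :
    ∑ n ∈ Finset.range N, ∫⁻ x, survivalFn U (t - x) ∂convPow U n + convPow U N (Iic t)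
      = (Ici 0).indicator 1 t := by
  induction N with
  | zero => simp [convPow, indicator_apply]
  | succ N ih =>
    rw [Finset.sum_range_succ, add_assoc, add_comm (∫⁻ _, _ ∂_),
      ← convPow_apply_Iic_eq_succ_add hU, ih]

noncomputable def potentialMeasure (U : Measure ℝ) : Measure ℝ :=
  Measure.sum (convPow U)

instance potentialMeasure.instSFinite [SFinite U] : SFinite (potentialMeasure U) :=
  inferInstanceAs (SFinite (Measure.sum (convPow U)))

lemma potentialMeasure_apply {s : Set ℝ} (hs : MeasurableSet s) :
    potentialMeasure U s = ∑' n, convPow U n s :=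
  Measure.sum_apply _ hs

lemma potentialMeasure_Iic_ne_top [IsProbabilityMeasure U] (hU : U (Iic 0) = 0) (t : ℝ) :
    potentialMeasure U (Iic t) ≠ ⊤ := by
  rw [potentialMeasure_apply measurableSet_Iic]
  exact tsum_convPow_Iic_ne_top hU t

lemma potentialMeasure_Iio_eq_zero [SFinite U] (hU : U (Iio 0) = 0) :
    potentialMeasure U (Iio 0) = 0 := by
  simp [potentialMeasure_apply measurableSet_Iio, convPow_Iio_eq_zero hU]

lemma lintegral_survivalFn_sub_potentialMeasure [IsProbabilityMeasure U] (hU : U (Iic 0) = 0)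
    (t : ℝ) :
    ∫⁻ x, survivalFn U (t - x) ∂potentialMeasure U = (Ici 0).indicator 1 t := by
  have hU' : U (Iio 0) = 0 := measure_mono_null Iio_subset_Iic_self hU
  have hfin := tsum_convPow_Iic_ne_top hU t
  have hpartial : Tendsto (fun N => (Ici 0).indicator 1 t - convPow U N (Iic t)) atTop
      (nhds ((Ici (0 : ℝ)).indicator (1 : ℝ → ℝ≥0∞) t)) := by
    simpa using ENNReal.Tendsto.sub tendsto_const_nhds
      (ENNReal.tendsto_atTop_zero_of_tsum_ne_top hfin) (Or.inr ENNReal.zero_ne_top)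
  rw [potentialMeasure, lintegral_sum_measure]
  refine tendsto_nhds_unique (ENNReal.tendsto_nat_tsum _) (hpartial.congr fun N => ?_)
  rw [← sum_lintegral_survivalFn_add_convPow hU' t N,
    ENNReal.add_sub_cancel_right (ENNReal.ne_top_of_tsum_ne_top hfin N)]

end RenewalEquation

section TruncatedMean

variable {U : Measure ℝ}

noncomputable def truncatedMean (U : Measure ℝ) (t : ℝ) : ℝ≥0∞ :=
  ∫⁻ s in Iic t, survivalFn U s

lemma truncatedMean_mono : Monotone (truncatedMean U) :=
  fun _ _ h => lintegral_mono_set (Iic_subset_Iic.mpr h)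

lemma truncatedMean_eq_setLIntegral_Ioc (t : ℝ) :
    truncatedMean U t = ∫⁻ s in Ioc 0 t, U (Ioi s) := by
  rw [truncatedMean, survivalFn, setLIntegral_indicator measurableSet_Ici, Ici_inter_Iic,
    setLIntegral_congr Ioc_ae_eq_Icc]

lemma truncatedMean_of_neg {t : ℝ} (ht : t < 0) : truncatedMean U t = 0 := by
  rw [truncatedMean_eq_setLIntegral_Ioc, Ioc_eq_empty (not_lt.mpr ht.le), Measure.restrict_empty,
    lintegral_zero_measure]

lemma setLIntegral_Iic_indicator_Ici_one (t : ℝ) :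
    ∫⁻ s in Iic t, (Ici 0).indicator 1 s = ENNReal.ofReal t := by
  rw [lintegral_indicator_one measurableSet_Ici, Measure.restrict_apply measurableSet_Ici,
    Ici_inter_Iic, volume_Icc, sub_zero]

lemma truncatedMean_le [IsProbabilityMeasure U] (t : ℝ) :
    truncatedMean U t ≤ ENNReal.ofReal t := by
  rw [← setLIntegral_Iic_indicator_Ici_one]
  exact lintegral_mono fun s => indicator_le_indicator prob_le_one

lemma setLIntegral_Iic_survivalFn_sub (x t : ℝ) :
    ∫⁻ s in Iic t, survivalFn U (s - x) = truncatedMean U (t - x) := by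
  have := (measurePreserving_sub_right volume x).setLIntegral_comp_preimage_emb
    (measurableEmbedding_subRight x) (survivalFn U) (Iic (t - x))
  rwa [preimage_sub_const_Iic, sub_add_cancel] at this

lemma lintegral_truncatedMean_sub_potentialMeasure [IsProbabilityMeasure U]
    (hU : U (Iic 0) = 0) (t : ℝ) :
    ∫⁻ x, truncatedMean U (t - x) ∂potentialMeasure U = ENNReal.ofReal t := by
  calc ∫⁻ x, truncatedMean U (t - x) ∂potentialMeasure U
      = ∫⁻ x, (∫⁻ s in Iic t, survivalFn U (s - x)) ∂potentialMeasure U := by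
        simp_rw [setLIntegral_Iic_survivalFn_sub]
    _ = ∫⁻ s in Iic t, ∫⁻ x, survivalFn U (s - x) ∂potentialMeasure U :=
        lintegral_lintegral_swap
          (measurable_survivalFn.comp (measurable_snd.sub measurable_fst)).aemeasurable
    _ = ENNReal.ofReal t := by
        simp_rw [lintegral_survivalFn_sub_potentialMeasure hU, setLIntegral_Iic_indicator_Ici_one]

lemma ofReal_le_truncatedMean_mul_potentialMeasure [IsProbabilityMeasure U]
    (hU : U (Iic 0) = 0) (t : ℝ) :
    ENNReal.ofReal t ≤ truncatedMean U t * potentialMeasure U (Icc 0 t) := by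
  have hV : potentialMeasure U (Iio 0) = 0 :=
    potentialMeasure_Iio_eq_zero (measure_mono_null Iio_subset_Iic_self hU)
  rw [← lintegral_truncatedMean_sub_potentialMeasure hU,
    ← lintegral_indicator_const measurableSet_Icc]
  refine lintegral_mono_ae ?_
  filter_upwards [measure_eq_zero_iff_ae_notMem.mp hV] with x hx
  rw [mem_Iio, not_lt] at hx
  by_cases hxt : x ≤ t
  · rw [indicator_of_mem (show x ∈ Icc 0 t from ⟨hx, hxt⟩)]
    exact truncatedMean_mono (by linarith)
  · rw [truncatedMean_of_neg (by linarith)]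
    exact zero_le

lemma truncatedMean_mul_potentialMeasure_le [IsProbabilityMeasure U] (hU : U (Iic 0) = 0)
    (t : ℝ) :
    truncatedMean U t * potentialMeasure U (Icc 0 t) ≤ ENNReal.ofReal (2 * t) := by
  calc truncatedMean U t * potentialMeasure U (Icc 0 t)
      = ∫⁻ _ in Icc 0 t, truncatedMean U t ∂potentialMeasure U := (setLIntegral_const _ _).symm
    _ ≤ ∫⁻ x in Icc 0 t, truncatedMean U (2 * t - x) ∂potentialMeasure U :=
        setLIntegral_mono' measurableSet_Icc fun x hx => truncatedMean_mono (by linarith [hx.2])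
    _ ≤ ∫⁻ x, truncatedMean U (2 * t - x) ∂potentialMeasure U := setLIntegral_le_lintegral _ _
    _ = ENNReal.ofReal (2 * t) := lintegral_truncatedMean_sub_potentialMeasure hU _

end TruncatedMean

section RenewalMeasure

variable {γ : ℝ} {p : ℝ → ℝ}

lemma renewalMeasure_apply (hγ : 0 ≤ γ) (hp : ∀ s, 0 < s → 0 ≤ p s)
    (hpint : IntegrableOn p (Ioi 0)) {A : Set ℝ} (hA : MeasurableSet A) :
    renewalMeasure γ p A = ENNReal.ofReal (γ * ∫ s in A ∩ Ioi 0, p s) := by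
  have hnonneg : 0 ≤ᵐ[volume.restrict (A ∩ Ioi 0)] fun s => γ * p s := by
    filter_upwards [ae_restrict_mem (hA.inter measurableSet_Ioi)] with s hs
    exact mul_nonneg hγ (hp s hs.2)
  rw [renewalMeasure, withDensity_apply _ hA, Measure.restrict_restrict hA,
    ← ofReal_integral_eq_lintegral_ofReal ((hpint.mono_set inter_subset_right).const_mul γ) hnonneg,
    integral_const_mul]

lemma renewalMeasure_Iic_zero (γ : ℝ) (p : ℝ → ℝ) : renewalMeasure γ p (Iic 0) = 0 :=
  withDensity_absolutelyContinuous _ _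
    (by simp [Measure.restrict_apply measurableSet_Iic, Iic_inter_Ioi])

lemma isProbabilityMeasure_renewalMeasure (hγ : 0 ≤ γ) (hp : ∀ s, 0 < s → 0 ≤ p s)
    (hpint : IntegrableOn p (Ioi 0)) (hprob : γ * ∫ s in Ioi (0 : ℝ), p s = 1) :
    IsProbabilityMeasure (renewalMeasure γ p) :=
  ⟨by rw [renewalMeasure_apply hγ hp hpint MeasurableSet.univ, univ_inter, hprob,
    ENNReal.ofReal_one]⟩

lemma truncatedMean_renewalMeasure (hγ : 0 ≤ γ) (hp : ∀ s, 0 < s → 0 ≤ p s)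
    (hpint : IntegrableOn p (Ioi 0)) (hprob : γ * ∫ s in Ioi (0 : ℝ), p s = 1) {t : ℝ}
    (ht : 0 ≤ t) :
    (truncatedMean (renewalMeasure γ p) t).toReal = ∫ s in 0..t, (1 - γ * ∫ r in 0..s, p r) := by
  have := isProbabilityMeasure_renewalMeasure hγ hp hpint hprob
  have hIoi : ∀ s, 0 ≤ s → (renewalMeasure γ p (Ioi s)).toReal = 1 - γ * ∫ r in 0..s, p r := by
    intro s hs
    have hint : 0 ≤ γ * ∫ r in Ioc 0 s, p r :=
      mul_nonneg hγ (setIntegral_nonneg measurableSet_Ioc fun r hr => hp r hr.1)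
    rw [← compl_Iic, prob_compl_eq_one_sub measurableSet_Iic,
      ENNReal.toReal_sub_of_le prob_le_one ENNReal.one_ne_top,
      renewalMeasure_apply hγ hp hpint measurableSet_Iic, Iic_inter_Ioi,
      ENNReal.toReal_ofReal hint, ENNReal.toReal_one, intervalIntegral.integral_of_le hs]
  rw [truncatedMean_eq_setLIntegral_Ioc, ← integral_toReal
      (Antitone.measurable fun _ _ h => measure_mono (Ioi_subset_Ioi h)).aemeasurable
      (ae_of_all _ fun _ => measure_lt_top _ _),
    intervalIntegral.integral_of_le ht]
  exact setIntegral_congr_fun measurableSet_Ioc fun s hs => hIoi s hs.1.le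

end RenewalMeasure

lemma le_liminf_and_limsup_le_of_eventually {α : Type*} {l : Filter α} [l.NeBot]
    {f : α → ℝ} {a b : ℝ} (h : ∀ᶠ x in l, a ≤ f x ∧ f x ≤ b) :
    a ≤ liminf f l ∧ limsup f l ≤ b :=
  ⟨le_liminf_of_le (isCoboundedUnder_ge_of_eventually_le l (h.mono fun _ hx => hx.2))
      (h.mono fun _ hx => hx.1),
    limsup_le_of_le (isCoboundedUnder_le_of_eventually_le l (h.mono fun _ hx => hx.1))
      (h.mono fun _ hx => hx.2)⟩

theorem renewal_critical_weak_asymptotics_general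
    (p : ℝ → ℝ)
    (hp01 : ∀ s, 0 ≤ s → 0 ≤ p s ∧ p s ≤ 1)
    (γ : ℝ) (hγ : 0 < γ)
    (hpint : IntegrableOn p (Set.Ioi 0))
    (hprob : γ * ∫ s in Set.Ioi (0:ℝ), p s = 1) :
    1 ≤ Filter.liminf
          (fun t : ℝ =>
            (∑' n : ℕ, convPow (renewalMeasure γ p) n (Set.Icc 0 t)).toReal
              * (∫ s in (0:ℝ)..t, (1 - γ * ∫ r in (0:ℝ)..s, p r)) / t)
          atTop ∧
    Filter.limsup
        (fun t : ℝ =>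
          (∑' n : ℕ, convPow (renewalMeasure γ p) n (Set.Icc 0 t)).toReal
            * (∫ s in (0:ℝ)..t, (1 - γ * ∫ r in (0:ℝ)..s, p r)) / t)
        atTop ≤ 2 := by
  have hp : ∀ s, 0 < s → 0 ≤ p s := fun s hs => (hp01 s hs.le).1
  have := isProbabilityMeasure_renewalMeasure hγ.le hp hpint hprob
  have hU := renewalMeasure_Iic_zero γ p
  refine le_liminf_and_limsup_le_of_eventually ?_
  filter_upwards [eventually_gt_atTop 0] with t ht
  rw [← truncatedMean_renewalMeasure hγ.le hp hpint hprob ht.le,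
    ← potentialMeasure_apply measurableSet_Icc, mul_comm, ← ENNReal.toReal_mul,
    one_le_div ht, div_le_iff₀ ht]
  have hfin : truncatedMean (renewalMeasure γ p) t * potentialMeasure (renewalMeasure γ p) (Icc 0 t)
      ≠ ⊤ :=
    ENNReal.mul_ne_top (ne_top_of_le_ne_top ENNReal.ofReal_ne_top (truncatedMean_le t))
      (ne_top_of_le_ne_top (potentialMeasure_Iic_ne_top hU t) (measure_mono Icc_subset_Iic_self))
  exact ⟨(ENNReal.ofReal_le_iff_le_toReal hfin).mp
      (ofReal_le_truncatedMean_mul_potentialMeasure hU t),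
    ENNReal.toReal_le_of_le_ofReal (by positivity) (truncatedMean_mul_potentialMeasure_le hU t)⟩

/-- Weak asymptotics at criticality (Erickson): if `U(ds) = γ p(s) ds` is a probability
measure, `Z(t) = ∑_{n≥0} U^{*n}([0,t])` and `m(t) = ∫₀^t (1 - γ ∫₀^s p(r) dr) ds` is the
truncated mean, then `1 ≤ liminf Z(t) m(t)/t` and `limsup Z(t) m(t)/t ≤ 2`. -/
theorem renewal_critical_weak_asymptotics
    (p : ℝ → ℝ) (hpm : Measurable p)
    (hp01 : ∀ s, 0 ≤ s → 0 ≤ p s ∧ p s ≤ 1)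
    (γ : ℝ) (hγ : 0 < γ)
    (hpint : IntegrableOn p (Set.Ioi 0))
    (hprob : γ * ∫ s in Set.Ioi (0:ℝ), p s = 1) :
    1 ≤ Filter.liminf
          (fun t : ℝ =>
            (∑' n : ℕ, convPow (renewalMeasure γ p) n (Set.Icc 0 t)).toReal
              * (∫ s in (0:ℝ)..t, (1 - γ * ∫ r in (0:ℝ)..s, p r)) / t)
          atTop ∧
    Filter.limsup
        (fun t : ℝ =>
          (∑' n : ℕ, convPow (renewalMeasure γ p) n (Set.Icc 0 t)).toReal
            * (∫ s in (0:ℝ)..t, (1 - γ * ∫ r in (0:ℝ)..s, p r)) / t)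
        atTop ≤ 2 :=
  renewal_critical_weak_asymptotics_general p hp01 γ hγ hpint hprob
end
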